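/- arXiv:1108.5637 — 9 statements merged into one kernel-verified Lean document; each statement's English description precedes it below -/
import Mathlib

section
/- Let G be a weighted graph with vertex weight ν > 0, let S₀, S₁ be disjoint sets partitioning V(G), with D₀ = sup_{v∈S₀} w_{S₁}(v)/ν(v) and K₀ = inf_{v∈S₁} w_{S₀}(v)/ν(v) > 0, where w_A(v) = ∑_{u∈A} w(u,v). Then for every f ∈ ℓ²_ν(G): ‖f‖_{2,ν} ≤ (1 + D₀/K₀)^{1/2} ‖f|_{S₀}‖_{2,ν} + K₀^{−1/2} ‖∇_w f‖₂. -/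
/-!
Split `‖f‖² = ‖f|_{S₀}‖² + ‖f|_{S₁}‖²`. Every `v ∈ S₁` carries weight at least `K₀ ν(v)` towards
`S₀`, so `‖f|_{S₁}‖²` is dominated by the `S₀ × S₁` edge sum of `|f(v)|² w(u,v) / K₀`. Writing
`|f(v)| ≤ |f(u)| + |f(u) - f(v)|` and applying Minkowski in `ℓ²(S₀ × S₁, w / K₀)`, the first part is
at most `(D₀ / K₀) ‖f|_{S₀}‖²` (each `u ∈ S₀` sends weight at most `D₀ ν(u)` to `S₁`) and the second
at most `‖∇_w f‖² / K₀`. A final Minkowski step in `ℝ²` recombines the two halves.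
-/

open Finset

theorem sqrt_sum_add_sq_le {ι : Type*} (s : Finset ι) (x y : ι → ℝ) :
    √(∑ i ∈ s, (x i + y i) ^ 2) ≤ √(∑ i ∈ s, x i ^ 2) + √(∑ i ∈ s, y i ^ 2) := by
  have hx : 0 ≤ ∑ i ∈ s, x i ^ 2 := by positivity
  have hy : 0 ≤ ∑ i ∈ s, y i ^ 2 := by positivity
  have hcs := Real.sum_mul_le_sqrt_mul_sqrt s x y
  refine Real.sqrt_le_iff.2 ⟨by positivity, ?_⟩
  calc ∑ i ∈ s, (x i + y i) ^ 2
      = ∑ i ∈ s, x i ^ 2 + 2 * ∑ i ∈ s, x i * y i + ∑ i ∈ s, y i ^ 2 := by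
        simp only [add_sq, sum_add_distrib, mul_sum, mul_assoc]
    _ ≤ (√(∑ i ∈ s, x i ^ 2) + √(∑ i ∈ s, y i ^ 2)) ^ 2 := by
        rw [add_sq, Real.sq_sqrt hx, Real.sq_sqrt hy]
        linarith

theorem sqrt_sum_add_sq_mul_le {ι : Type*} (s : Finset ι) (x y c : ι → ℝ)
    (hc : ∀ i ∈ s, 0 ≤ c i) :
    √(∑ i ∈ s, (x i + y i) ^ 2 * c i) ≤
      √(∑ i ∈ s, x i ^ 2 * c i) + √(∑ i ∈ s, y i ^ 2 * c i) := by
  have hweight (z : ι → ℝ) : ∑ i ∈ s, z i ^ 2 * c i = ∑ i ∈ s, (z i * √(c i)) ^ 2 :=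
    sum_congr rfl fun i hi => by rw [mul_pow, Real.sq_sqrt (hc i hi)]
  simpa only [hweight, add_mul] using
    sqrt_sum_add_sq_le s (fun i => x i * √(c i)) (fun i => y i * √(c i))

theorem sqrt_add_le_of_sqrt_le {a b x c g : ℝ} (ha : 0 ≤ a) (hb : 0 ≤ b) (hx : 0 ≤ x)
    (hg : 0 ≤ g) (hxa : x ≤ c * a) (hbx : √b ≤ √x + g) :
    √(a + b) ≤ √(1 + c) * √a + g := by
  have hminkowski : √(a + (√x + g) ^ 2) ≤ √(a + x) + g := by
    have hxax : √x ≤ √(a + x) := Real.sqrt_le_sqrt (le_add_of_nonneg_left ha)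
    refine Real.sqrt_le_iff.2 ⟨by positivity, ?_⟩
    nlinarith [Real.sq_sqrt hx, Real.sq_sqrt (add_nonneg ha hx)]
  calc √(a + b) = √(a + √b ^ 2) := by rw [Real.sq_sqrt hb]
    _ ≤ √(a + (√x + g) ^ 2) := by gcongr
    _ ≤ √(a + x) + g := hminkowski
    _ ≤ √((1 + c) * a) + g := by gcongr; linarith
    _ = √(1 + c) * √a + g := by rw [Real.sqrt_mul' _ ha]

section WeightedGraph

variable {V E : Type*} [SeminormedAddCommGroup E] (w : V → V → ℝ) (ν : V → ℝ)
  (S₀ S₁ : Finset V) (K₀ D₀ : ℝ) (f : V → E)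

theorem sum_norm_sq_mul_le_sum_cross_of_le_sum_weight (hK₀pos : 0 < K₀)
    (hK₀ : ∀ v ∈ S₁, K₀ * ν v ≤ ∑ u ∈ S₀, w u v) :
    ∑ v ∈ S₁, ‖f v‖ ^ 2 * ν v ≤ ∑ p ∈ S₀ ×ˢ S₁, ‖f p.2‖ ^ 2 * (w p.1 p.2 / K₀) := by
  rw [sum_product' S₀ S₁ fun u v => ‖f v‖ ^ 2 * (w u v / K₀), sum_comm]
  gcongr with v hv
  rw [← mul_sum, ← sum_div]
  gcongr
  rw [le_div_iff₀ hK₀pos, mul_comm]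
  exact hK₀ v hv

theorem sum_cross_le_mul_sum_of_sum_weight_le (hK₀ : 0 ≤ K₀)
    (hsymm : ∀ u v, w u v = w v u) (hD₀ : ∀ v ∈ S₀, ∑ u ∈ S₁, w u v ≤ D₀ * ν v) :
    ∑ p ∈ S₀ ×ˢ S₁, ‖f p.1‖ ^ 2 * (w p.1 p.2 / K₀) ≤
      D₀ / K₀ * ∑ u ∈ S₀, ‖f u‖ ^ 2 * ν u := by
  rw [sum_product' S₀ S₁ fun u v => ‖f u‖ ^ 2 * (w u v / K₀), mul_sum]
  gcongr with u hu
  have hdeg : ∑ v ∈ S₁, w u v ≤ D₀ * ν u := by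
    simpa only [hsymm u] using hD₀ u hu
  calc ∑ v ∈ S₁, ‖f u‖ ^ 2 * (w u v / K₀)
      = ‖f u‖ ^ 2 * ((∑ v ∈ S₁, w u v) / K₀) := by rw [sum_div, mul_sum]
    _ ≤ ‖f u‖ ^ 2 * (D₀ * ν u / K₀) := by gcongr
    _ = D₀ / K₀ * (‖f u‖ ^ 2 * ν u) := by ring

theorem sqrt_sum_norm_sq_snd_le (s : Finset (V × V)) (c : V × V → ℝ) (hc : ∀ p, 0 ≤ c p) :
    √(∑ p ∈ s, ‖f p.2‖ ^ 2 * c p) ≤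
      √(∑ p ∈ s, ‖f p.1‖ ^ 2 * c p) + √(∑ p ∈ s, ‖f p.1 - f p.2‖ ^ 2 * c p) := by
  refine le_trans ?_ (sqrt_sum_add_sq_mul_le s _ _ c fun p _ => hc p)
  gcongr with p
  · exact hc p
  · exact norm_le_norm_add_norm_sub _ _

theorem sqrt_sum_norm_sub_sq_le [Fintype V] (s : Finset (V × V)) (hK₀pos : 0 < K₀)
    (hw : ∀ u v, 0 ≤ w u v) :
    √(∑ p ∈ s, ‖f p.1 - f p.2‖ ^ 2 * (w p.1 p.2 / K₀)) ≤
      1 / √K₀ * √(∑ u, ∑ v, ‖f u - f v‖ ^ 2 * w u v) := by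
  simp_rw [← mul_div_assoc, ← sum_div]
  rw [Real.sqrt_div' _ hK₀pos.le, one_div_mul_eq_div, ← Fintype.sum_prod_type']
  gcongr
  · exact fun p _ _ => mul_nonneg (sq_nonneg _) (hw p.1 p.2)
  · exact subset_univ s

end WeightedGraph

theorem statement1_general {V : Type*} [Fintype V] [DecidableEq V] (w : V → V → ℝ)
    (hsymm : ∀ u v, w u v = w v u)
    (hnonneg : ∀ u v, 0 ≤ w u v) (ν : V → ℝ) (hν : ∀ v, 0 < ν v)
    (S₀ S₁ : Finset V) (hdisj : Disjoint S₀ S₁) (hcover : S₀ ∪ S₁ = Finset.univ)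
    (D₀ K₀ : ℝ) (hK₀pos : 0 < K₀)
    (hK₀ : ∀ v ∈ S₁, K₀ * ν v ≤ ∑ u ∈ S₀, w u v)
    (hD₀ : ∀ v ∈ S₀, ∑ u ∈ S₁, w u v ≤ D₀ * ν v)
    (f : V → ℂ) :
    Real.sqrt (∑ v, ‖f v‖ ^ 2 * ν v) ≤
      Real.sqrt (1 + D₀ / K₀) * Real.sqrt (∑ v ∈ S₀, ‖f v‖ ^ 2 * ν v) +
        (1 / Real.sqrt K₀) *
          Real.sqrt (∑ u, ∑ v, ‖f u - f v‖ ^ 2 * w u v) := by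
  have hweight (p : V × V) : 0 ≤ w p.1 p.2 / K₀ := div_nonneg (hnonneg _ _) hK₀pos.le
  have hsplit : ∑ v, ‖f v‖ ^ 2 * ν v =
      ∑ v ∈ S₀, ‖f v‖ ^ 2 * ν v + ∑ v ∈ S₁, ‖f v‖ ^ 2 * ν v := by
    rw [← sum_union hdisj, hcover]
  rw [hsplit]
  refine sqrt_add_le_of_sqrt_le (x := ∑ p ∈ S₀ ×ˢ S₁, ‖f p.1‖ ^ 2 * (w p.1 p.2 / K₀))
    (sum_nonneg fun v _ => mul_nonneg (sq_nonneg _) (hν v).le)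
    (sum_nonneg fun v _ => mul_nonneg (sq_nonneg _) (hν v).le)
    (sum_nonneg fun p _ => mul_nonneg (sq_nonneg _) (hweight p)) (by positivity)
    (sum_cross_le_mul_sum_of_sum_weight_le w ν S₀ S₁ K₀ D₀ f hK₀pos.le hsymm hD₀) ?_
  calc √(∑ v ∈ S₁, ‖f v‖ ^ 2 * ν v)
      ≤ √(∑ p ∈ S₀ ×ˢ S₁, ‖f p.2‖ ^ 2 * (w p.1 p.2 / K₀)) :=
        Real.sqrt_le_sqrt <|
          sum_norm_sq_mul_le_sum_cross_of_le_sum_weight w ν S₀ S₁ K₀ f hK₀pos hK₀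
    _ ≤ _ := sqrt_sum_norm_sq_snd_le f _ _ hweight
    _ ≤ _ := by gcongr; exact sqrt_sum_norm_sub_sq_le w K₀ f _ hK₀pos hnonneg

/-- two-set Poincaré inequality, p = 2. -/
theorem statement1 {V : Type*} [Fintype V] [DecidableEq V] (w : V → V → ℝ)
    (hsymm : ∀ u v, w u v = w v u) (hdiag : ∀ u, w u u = 0)
    (hnonneg : ∀ u v, 0 ≤ w u v) (ν : V → ℝ) (hν : ∀ v, 0 < ν v)
    (S₀ S₁ : Finset V) (hdisj : Disjoint S₀ S₁) (hcover : S₀ ∪ S₁ = Finset.univ)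
    (D₀ K₀ : ℝ) (hK₀pos : 0 < K₀)
    (hK₀ : ∀ v ∈ S₁, K₀ * ν v ≤ ∑ u ∈ S₀, w u v)
    (hD₀ : ∀ v ∈ S₀, ∑ u ∈ S₁, w u v ≤ D₀ * ν v)
    (f : V → ℂ) :
    Real.sqrt (∑ v, ‖f v‖ ^ 2 * ν v) ≤
      Real.sqrt (1 + D₀ / K₀) * Real.sqrt (∑ v ∈ S₀, ‖f v‖ ^ 2 * ν v) +
        (1 / Real.sqrt K₀) *
          Real.sqrt (∑ u, ∑ v, ‖f u - f v‖ ^ 2 * w u v) :=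
  statement1_general w hsymm hnonneg ν hν S₀ S₁ hdisj hcover D₀ K₀ hK₀pos hK₀ hD₀ f
end

section
/- Let G be a weighted graph with vertex weight ν, and S₀, S₁ disjoint subsets of V(G) with K̂₀ = inf_{v∈S₀} w_{S₁}(v)/ν(v) > 0 and D̂₀ = sup_{v∈S₁} w_{S₀}(v)/ν(v) > 0. Then for every f ∈ ℓ²_ν(G): (1 + K̂₀/D̂₀)^{1/2} ‖f|_{S₀}‖_{2,ν} ≤ ‖f‖_{2,ν} + D̂₀^{−1/2} ‖∇_w f‖₂. -/
/-!
Write `a, b, n` for the weighted `ℓ²` norms of `f` on `S₀`, on `S₁` and on all of `V`, and `e`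
for `‖∇_w f‖₂`. Summing `|f v|² w(u, v)` over the cut edges `v ∈ S₀`, `u ∈ S₁` gives at least
`K₀ a²`, while the triangle inequality `|f v| ≤ |f u| + |f u - f v|` and Minkowski's inequality
bound its square root by `√D₀ b + e`. Hence `K₀ a² / D₀ ≤ (b + e / √D₀)²`, and since
`a² + b² ≤ n²` with `b ≤ n`, `(1 + K₀ / D₀) a² ≤ a² + (b + e / √D₀)² ≤ (n + e / √D₀)²`.
-/

open Finset

theorem Real.sqrt_sum_sq_mul_le_of_le_add {ι : Type*} (s : Finset ι) {c x y z : ι → ℝ}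
    (hc : ∀ i ∈ s, 0 ≤ c i) (hz : ∀ i ∈ s, 0 ≤ z i) (hzxy : ∀ i ∈ s, z i ≤ x i + y i) :
    √(∑ i ∈ s, z i ^ 2 * c i) ≤ √(∑ i ∈ s, x i ^ 2 * c i) + √(∑ i ∈ s, y i ^ 2 * c i) := by
  have hsq : ∀ a : ι → ℝ, ∀ i ∈ s, (a i * √(c i)) ^ 2 = a i ^ 2 * c i := fun a i hi => by
    rw [mul_pow, Real.sq_sqrt (hc i hi)]
  have hcauchy := Real.sum_mul_le_sqrt_mul_sqrt s (fun i => x i * √(c i)) (fun i => y i * √(c i))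
  rw [sum_congr rfl (hsq x), sum_congr rfl (hsq y)] at hcauchy
  have hX := Real.sq_sqrt (sum_nonneg fun i hi => mul_nonneg (sq_nonneg (x i)) (hc i hi))
  have hY := Real.sq_sqrt (sum_nonneg fun i hi => mul_nonneg (sq_nonneg (y i)) (hc i hi))
  rw [Real.sqrt_le_left (by positivity)]
  calc ∑ i ∈ s, z i ^ 2 * c i
      ≤ ∑ i ∈ s, (x i ^ 2 * c i + 2 * (x i * √(c i) * (y i * √(c i))) + y i ^ 2 * c i) := by
        refine sum_le_sum fun i hi => ?_
        have hcross : x i * √(c i) * (y i * √(c i)) = x i * y i * c i := by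
          rw [mul_mul_mul_comm, Real.mul_self_sqrt (hc i hi)]
        rw [hcross]
        nlinarith [pow_le_pow_left₀ (hz i hi) (hzxy i hi) 2, hc i hi]
    _ = ∑ i ∈ s, x i ^ 2 * c i + 2 * ∑ i ∈ s, x i * √(c i) * (y i * √(c i)) +
          ∑ i ∈ s, y i ^ 2 * c i := by
        rw [sum_add_distrib, sum_add_distrib, mul_sum]
    _ ≤ _ := by nlinarith

section WeightedGraph

variable {V E : Type*} [SeminormedAddCommGroup E]

def weightedSqNorm (ν : V → ℝ) (f : V → E) (s : Finset V) : ℝ :=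
  ∑ v ∈ s, ‖f v‖ ^ 2 * ν v

def dirichletEnergy [Fintype V] (w : V → V → ℝ) (f : V → E) : ℝ :=
  ∑ u, ∑ v, ‖f u - f v‖ ^ 2 * w u v

theorem weightedSqNorm_nonneg {ν : V → ℝ} (hν : ∀ v, 0 ≤ ν v) (f : V → E) (s : Finset V) :
    0 ≤ weightedSqNorm ν f s :=
  sum_nonneg fun v _ => mul_nonneg (sq_nonneg _) (hν v)

theorem weightedSqNorm_add_le_of_disjoint [Fintype V] [DecidableEq V] {ν : V → ℝ}
    (hν : ∀ v, 0 ≤ ν v) (f : V → E) {s t : Finset V} (hst : Disjoint s t) :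
    weightedSqNorm ν f s + weightedSqNorm ν f t ≤ weightedSqNorm ν f univ := by
  rw [weightedSqNorm, weightedSqNorm, ← sum_union hst]
  exact sum_le_sum_of_subset_of_nonneg (subset_univ _) fun v _ _ => mul_nonneg (sq_nonneg _) (hν v)

theorem sum_sum_sq_norm_sub_mul_le_dirichletEnergy [Fintype V] {w : V → V → ℝ}
    (hw : ∀ u v, 0 ≤ w u v) (f : V → E) (s t : Finset V) :
    ∑ v ∈ s, ∑ u ∈ t, ‖f u - f v‖ ^ 2 * w u v ≤ dirichletEnergy w f := by
  have hterm : ∀ u v, 0 ≤ ‖f u - f v‖ ^ 2 * w u v := fun u v => mul_nonneg (sq_nonneg _) (hw u v)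
  rw [sum_comm]
  calc ∑ u ∈ t, ∑ v ∈ s, ‖f u - f v‖ ^ 2 * w u v
      ≤ ∑ u ∈ t, ∑ v, ‖f u - f v‖ ^ 2 * w u v :=
        sum_le_sum fun u _ => sum_le_sum_of_subset_of_nonneg (subset_univ _) fun v _ _ => hterm u v
    _ ≤ dirichletEnergy w f :=
        sum_le_sum_of_subset_of_nonneg (subset_univ _) fun u _ _ => sum_nonneg fun v _ => hterm u v

theorem mul_weightedSqNorm_le_sq_sqrt_add_sqrt_dirichletEnergy [Fintype V] {w : V → V → ℝ}
    (hsymm : ∀ u v, w u v = w v u) (hw : ∀ u v, 0 ≤ w u v) {ν : V → ℝ} {S₀ S₁ : Finset V}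
    {K D : ℝ} (hK : ∀ v ∈ S₀, K * ν v ≤ ∑ u ∈ S₁, w u v)
    (hD : ∀ v ∈ S₁, ∑ u ∈ S₀, w u v ≤ D * ν v) (f : V → E) :
    K * weightedSqNorm ν f S₀ ≤
      (√(D * weightedSqNorm ν f S₁) + √(dirichletEnergy w f)) ^ 2 := by
  have hcutLower : K * weightedSqNorm ν f S₀ ≤ ∑ v ∈ S₀, ∑ u ∈ S₁, ‖f v‖ ^ 2 * w u v := by
    rw [weightedSqNorm, mul_sum]
    refine sum_le_sum fun v hv => ?_
    rw [← mul_sum, mul_left_comm]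
    exact mul_le_mul_of_nonneg_left (hK v hv) (sq_nonneg _)
  have hcutUpper : ∑ v ∈ S₀, ∑ u ∈ S₁, ‖f u‖ ^ 2 * w u v ≤ D * weightedSqNorm ν f S₁ := by
    rw [sum_comm, weightedSqNorm, mul_sum]
    refine sum_le_sum fun u hu => ?_
    calc ∑ v ∈ S₀, ‖f u‖ ^ 2 * w u v = ‖f u‖ ^ 2 * ∑ v ∈ S₀, w v u := by
          rw [mul_sum]; exact sum_congr rfl fun v _ => by rw [hsymm]
      _ ≤ ‖f u‖ ^ 2 * (D * ν u) := mul_le_mul_of_nonneg_left (hD u hu) (sq_nonneg _)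
      _ = D * (‖f u‖ ^ 2 * ν u) := by ring
  have hminkowski := Real.sqrt_sum_sq_mul_le_of_le_add (S₀ ×ˢ S₁) (c := fun p => w p.2 p.1)
    (x := fun p => ‖f p.2‖) (y := fun p => ‖f p.2 - f p.1‖) (fun p _ => hw _ _)
    (fun p _ => norm_nonneg (f p.1))
    (fun p _ => (norm_le_norm_add_norm_sub' (f p.1) (f p.2)).trans_eq (by rw [norm_sub_rev]))
  simp only [sum_product] at hminkowski
  have hcutGrad := sum_sum_sq_norm_sub_mul_le_dirichletEnergy hw f S₀ S₁
  calc K * weightedSqNorm ν f S₀ ≤ ∑ v ∈ S₀, ∑ u ∈ S₁, ‖f v‖ ^ 2 * w u v := hcutLower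
    _ ≤ _ := (Real.sqrt_le_left (by positivity)).1 hminkowski
    _ ≤ _ := by gcongr

end WeightedGraph

theorem sqrt_one_add_div_mul_sqrt_le {K D A B N E : ℝ} (hD : 0 < D) (hA : 0 ≤ A) (hB : 0 ≤ B)
    (hABN : A + B ≤ N) (hKA : K * A ≤ (√(D * B) + √E) ^ 2) :
    √(1 + K / D) * √A ≤ √N + 1 / √D * √E := by
  obtain ⟨s, hs, rfl⟩ : ∃ s, 0 < s ∧ s ^ 2 = D := ⟨√D, Real.sqrt_pos.2 hD, Real.sq_sqrt hD.le⟩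
  rw [Real.sqrt_mul (sq_nonneg s), Real.sqrt_sq hs.le] at hKA
  rw [Real.sqrt_sq hs.le, ← Real.sqrt_mul' _ hA, Real.sqrt_le_left (by positivity)]
  have hBN : √B ≤ √N := Real.sqrt_le_sqrt (by linarith)
  have key : s ^ 2 * A + K * A ≤ (s * √N + √E) ^ 2 := by
    nlinarith [Real.sq_sqrt hB, Real.sq_sqrt (hB.trans (by linarith) : 0 ≤ N),
      mul_le_mul_of_nonneg_left hBN (mul_nonneg hs.le (Real.sqrt_nonneg E))]
  calc (1 + K / s ^ 2) * A = (s ^ 2 * A + K * A) / s ^ 2 := by field_simp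
    _ ≤ (s * √N + √E) ^ 2 / s ^ 2 := by gcongr
    _ = (√N + 1 / s * √E) ^ 2 := by field_simp

theorem statement2_general {V : Type*} [Fintype V] (w : V → V → ℝ)
    (hsymm : ∀ u v, w u v = w v u)
    (hnonneg : ∀ u v, 0 ≤ w u v) (ν : V → ℝ) (hν : ∀ v, 0 < ν v)
    (S₀ S₁ : Finset V) (hdisj : Disjoint S₀ S₁)
    (K₀ D₀ : ℝ) (hD₀pos : 0 < D₀)
    (hK₀ : ∀ v ∈ S₀, K₀ * ν v ≤ ∑ u ∈ S₁, w u v)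
    (hD₀ : ∀ v ∈ S₁, ∑ u ∈ S₀, w u v ≤ D₀ * ν v)
    (f : V → ℂ) :
    Real.sqrt (1 + K₀ / D₀) * Real.sqrt (∑ v ∈ S₀, ‖f v‖ ^ 2 * ν v) ≤
      Real.sqrt (∑ v, ‖f v‖ ^ 2 * ν v) +
        (1 / Real.sqrt D₀) *
          Real.sqrt (∑ u, ∑ v, ‖f u - f v‖ ^ 2 * w u v) := by
  classical
  have hν' : ∀ v, 0 ≤ ν v := fun v => (hν v).le
  exact sqrt_one_add_div_mul_sqrt_le hD₀pos (weightedSqNorm_nonneg hν' f S₀)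
    (weightedSqNorm_nonneg hν' f S₁)
    (weightedSqNorm_add_le_of_disjoint hν' f hdisj)
    (mul_weightedSqNorm_le_sq_sqrt_add_sqrt_dirichletEnergy hsymm hnonneg hK₀ hD₀ f)

/-- two-set reverse (lower) estimate, p = 2. -/
theorem statement2 {V : Type*} [Fintype V] (w : V → V → ℝ)
    (hsymm : ∀ u v, w u v = w v u) (hdiag : ∀ u, w u u = 0)
    (hnonneg : ∀ u v, 0 ≤ w u v) (ν : V → ℝ) (hν : ∀ v, 0 < ν v)
    (S₀ S₁ : Finset V) (hdisj : Disjoint S₀ S₁)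
    (K₀ D₀ : ℝ) (hK₀pos : 0 < K₀) (hD₀pos : 0 < D₀)
    (hK₀ : ∀ v ∈ S₀, K₀ * ν v ≤ ∑ u ∈ S₁, w u v)
    (hD₀ : ∀ v ∈ S₁, ∑ u ∈ S₀, w u v ≤ D₀ * ν v)
    (f : V → ℂ) :
    Real.sqrt (1 + K₀ / D₀) * Real.sqrt (∑ v ∈ S₀, ‖f v‖ ^ 2 * ν v) ≤
      Real.sqrt (∑ v, ‖f v‖ ^ 2 * ν v) +
        (1 / Real.sqrt D₀) *
          Real.sqrt (∑ u, ∑ v, ‖f u - f v‖ ^ 2 * w u v) :=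
  statement2_general w hsymm hnonneg ν hν S₀ S₁ hdisj K₀ D₀ hD₀pos hK₀ hD₀ f
end

section
/- Key step of the main theorem: Let (S_m)_{m=0,…,n} be a partition of V(G) with K_{m−1} = inf_{v∈S_m} w_{S_{m−1}}(v)/ν(v) > 0 and D_{m−1} = sup_{v∈S_{m−1}} w_{S_m}(v)/ν(v). Then for every f ∈ ℓ^p_ν(G), 1 ≤ p < ∞, and every m ≥ 1: ‖f|_{S_m}‖_{p,ν} ≤ (D_{m−1}/K_{m−1})^{1/p} ‖f|_{S_{m−1}}‖_{p,ν} + φ_{m,p}, where φ_{m,p} = (K_{m−1}^{−1} ∑_{u∈S_m} ∑_{v∈S_{m−1}} |f(u)−f(v)|^p w(u,v))^{1/p}. -/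
open Finset

/-!
Take the `ℓ^p` norm, over the edges `(u, v) ∈ S_m × S_{m-1}` weighted by `w(u, v) / K`, of the
pointwise inequality `‖f u‖ ≤ ‖f v‖ + ‖f u - f v‖` and apply Minkowski's inequality. Since
`K ν(u) ≤ w_{S_{m-1}}(u)`, the left side dominates `‖f|_{S_m}‖_{p,ν}`; since `w_{S_m}(v) ≤ D ν(v)`,
the first term on the right is at most `(D/K)^{1/p} ‖f|_{S_{m-1}}‖_{p,ν}`, and the second is `φ_{m,p}`.
-/

namespace Real

theorem Lp_weighted_le_of_le_add {ι : Type*} (s : Finset ι) {p : ℝ} (hp : 1 ≤ p)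
    {c x g h : ι → ℝ} (hc : ∀ i ∈ s, 0 ≤ c i) (hx : ∀ i ∈ s, 0 ≤ x i)
    (hg : ∀ i ∈ s, 0 ≤ g i) (hh : ∀ i ∈ s, 0 ≤ h i) (hxgh : ∀ i ∈ s, x i ≤ g i + h i) :
    (∑ i ∈ s, x i ^ p * c i) ^ (1 / p) ≤
      (∑ i ∈ s, g i ^ p * c i) ^ (1 / p) + (∑ i ∈ s, h i ^ p * c i) ^ (1 / p) := by
  have hp0 : 0 < p := by linarith
  have weight_inside : ∀ y : ι → ℝ, (∀ i ∈ s, 0 ≤ y i) →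
      ∑ i ∈ s, y i ^ p * c i = ∑ i ∈ s, (y i * c i ^ p⁻¹) ^ p := fun y hy ↦
    sum_congr rfl fun i hi ↦ by
      rw [mul_rpow (hy i hi) (rpow_nonneg (hc i hi) _), rpow_inv_rpow (hc i hi) hp0.ne']
  rw [weight_inside x hx, weight_inside g hg, weight_inside h hh]
  refine le_trans ?_ (Lp_add_le_of_nonneg s hp
    (fun i hi ↦ mul_nonneg (hg i hi) (rpow_nonneg (hc i hi) _))
    (fun i hi ↦ mul_nonneg (hh i hi) (rpow_nonneg (hc i hi) _)))
  gcongr with i hi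
  · exact sum_nonneg fun i hi ↦ rpow_nonneg (mul_nonneg (hx i hi) (rpow_nonneg (hc i hi) _)) _
  · exact mul_nonneg (hx i hi) (rpow_nonneg (hc i hi) _)
  · rw [← add_mul]
    exact mul_le_mul_of_nonneg_right (hxgh i hi) (rpow_nonneg (hc i hi) _)

end Real

section DoubleSums

variable {V : Type*} {A B : Finset V} {c : V → V → ℝ} {ν g : V → ℝ}

theorem sum_mul_le_sum_sum_of_le_sum (hg : ∀ v ∈ B, 0 ≤ g v)
    (hc : ∀ v ∈ B, ν v ≤ ∑ u ∈ A, c u v) :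
    ∑ v ∈ B, g v * ν v ≤ ∑ v ∈ B, ∑ u ∈ A, g v * c u v :=
  sum_le_sum fun v hv ↦ by
    rw [← mul_sum]
    exact mul_le_mul_of_nonneg_left (hc v hv) (hg v hv)

theorem sum_sum_le_mul_sum_of_sum_le {D : ℝ} (hg : ∀ v ∈ A, 0 ≤ g v)
    (hc : ∀ v ∈ A, ∑ u ∈ B, c u v ≤ D * ν v) :
    ∑ u ∈ B, ∑ v ∈ A, g v * c u v ≤ D * ∑ v ∈ A, g v * ν v := by
  rw [sum_comm, mul_sum]
  refine sum_le_sum fun v hv ↦ ?_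
  rw [← mul_sum]
  calc g v * ∑ u ∈ B, c u v ≤ g v * (D * ν v) := mul_le_mul_of_nonneg_left (hc v hv) (hg v hv)
    _ = D * (g v * ν v) := by ring

theorem nonneg_of_sum_le_mul {D : ℝ} (hc : ∀ u v, 0 ≤ c u v) (hν : ∀ v ∈ A, 0 < ν v)
    (hD : ∀ v ∈ A, ∑ u ∈ B, c u v ≤ D * ν v) (hA : A.Nonempty) : 0 ≤ D := by
  obtain ⟨v, hv⟩ := hA
  exact nonneg_of_mul_nonneg_left ((sum_nonneg fun u _ ↦ hc u v).trans (hD v hv)) (hν v hv)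

theorem Lp_sum_sum_norm_le_add {E : Type*} [SeminormedAddGroup E] {p : ℝ} (hp : 1 ≤ p)
    (hc : ∀ u v, 0 ≤ c u v) (f : V → E) :
    (∑ u ∈ B, ∑ v ∈ A, ‖f u‖ ^ p * c u v) ^ (1 / p) ≤
      (∑ u ∈ B, ∑ v ∈ A, ‖f v‖ ^ p * c u v) ^ (1 / p) +
        (∑ u ∈ B, ∑ v ∈ A, ‖f u - f v‖ ^ p * c u v) ^ (1 / p) := by
  simpa only [sum_product] using Real.Lp_weighted_le_of_le_add (B ×ˢ A) hp
    (c := fun q ↦ c q.1 q.2) (x := fun q ↦ ‖f q.1‖) (g := fun q ↦ ‖f q.2‖)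
    (h := fun q ↦ ‖f q.1 - f q.2‖) (fun q _ ↦ hc q.1 q.2) (fun _ _ ↦ norm_nonneg _)
    (fun _ _ ↦ norm_nonneg _) (fun _ _ ↦ norm_nonneg _)
    fun q _ ↦ norm_le_norm_add_norm_sub' (f q.1) (f q.2)

end DoubleSums

theorem statement3_general {V : Type*} (w : V → V → ℝ)
    (hsymm : ∀ u v, w u v = w v u)
    (hnonneg : ∀ u v, 0 ≤ w u v) (ν : V → ℝ) (hν : ∀ v, 0 < ν v)
    (p : ℝ) (hp : 1 ≤ p)
    (A B : Finset V)
    (K D : ℝ) (hKpos : 0 < K)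
    (hK : ∀ v ∈ B, K * ν v ≤ ∑ u ∈ A, w u v)
    (hD : ∀ v ∈ A, ∑ u ∈ B, w u v ≤ D * ν v)
    (f : V → ℂ) :
    (∑ v ∈ B, ‖f v‖ ^ p * ν v) ^ (1 / p) ≤
      (D / K) ^ (1 / p) * (∑ v ∈ A, ‖f v‖ ^ p * ν v) ^ (1 / p) +
        (K⁻¹ * ∑ u ∈ B, ∑ v ∈ A, ‖f u - f v‖ ^ p * w u v) ^ (1 / p) := by
  have hp0 : 0 < p := by linarith
  have hw : ∀ u v, 0 ≤ K⁻¹ * w u v := fun u v ↦ mul_nonneg (inv_nonneg.2 hKpos.le) (hnonneg u v)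
  have lower : ∑ v ∈ B, ‖f v‖ ^ p * ν v ≤ ∑ u ∈ B, ∑ v ∈ A, ‖f u‖ ^ p * (K⁻¹ * w u v) :=
    sum_mul_le_sum_sum_of_le_sum (c := fun u v ↦ K⁻¹ * w v u) (fun _ _ ↦ by positivity)
      fun v hv ↦ by
        rw [← mul_sum, le_inv_mul_iff₀ hKpos]
        simpa only [hsymm v] using hK v hv
  have upper : ∑ u ∈ B, ∑ v ∈ A, ‖f v‖ ^ p * (K⁻¹ * w u v) ≤
      D / K * ∑ v ∈ A, ‖f v‖ ^ p * ν v :=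
    sum_sum_le_mul_sum_of_sum_le (fun _ _ ↦ by positivity) fun v hv ↦ by
      rw [← mul_sum, div_eq_inv_mul, mul_assoc]
      exact mul_le_mul_of_nonneg_left (hD v hv) (inv_nonneg.2 hKpos.le)
  have edge_sum : ∑ u ∈ B, ∑ v ∈ A, ‖f u - f v‖ ^ p * (K⁻¹ * w u v) =
      K⁻¹ * ∑ u ∈ B, ∑ v ∈ A, ‖f u - f v‖ ^ p * w u v := by
    simp only [mul_sum]
    exact sum_congr rfl fun _ _ ↦ sum_congr rfl fun _ _ ↦ by ring
  have split_factor : (D / K * ∑ v ∈ A, ‖f v‖ ^ p * ν v) ^ (1 / p) =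
      (D / K) ^ (1 / p) * (∑ v ∈ A, ‖f v‖ ^ p * ν v) ^ (1 / p) := by
    rcases A.eq_empty_or_nonempty with rfl | hA
    · simp [Real.zero_rpow (inv_ne_zero hp0.ne')]
    · exact Real.mul_rpow (div_nonneg (nonneg_of_sum_le_mul hnonneg (fun v _ ↦ hν v) hD hA)
        hKpos.le) (sum_nonneg fun v _ ↦ mul_nonneg (by positivity) (hν v).le)
  calc (∑ v ∈ B, ‖f v‖ ^ p * ν v) ^ (1 / p)
      ≤ (∑ u ∈ B, ∑ v ∈ A, ‖f u‖ ^ p * (K⁻¹ * w u v)) ^ (1 / p) :=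
        Real.rpow_le_rpow (sum_nonneg fun v _ ↦ mul_nonneg (by positivity) (hν v).le) lower
          (by positivity)
    _ ≤ _ := Lp_sum_sum_norm_le_add hp hw f
    _ ≤ (D / K * ∑ v ∈ A, ‖f v‖ ^ p * ν v) ^ (1 / p) +
          (K⁻¹ * ∑ u ∈ B, ∑ v ∈ A, ‖f u - f v‖ ^ p * w u v) ^ (1 / p) := by
      rw [edge_sum]
      gcongr
      exact sum_nonneg fun u _ ↦ sum_nonneg fun v _ ↦ mul_nonneg (by positivity) (hw u v)
    _ = _ := by rw [split_factor]

/-- key step of the main theorem. With `A = S_{m-1}`, `B = S_m`,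
`K = K_{m-1}`, `D = D_{m-1}`, for `1 ≤ p < ∞`:
`‖f|_B‖_{p,ν} ≤ (D/K)^{1/p} ‖f|_A‖_{p,ν} + φ_{m,p}`. -/
theorem statement3 {V : Type*} [Fintype V] (w : V → V → ℝ)
    (hsymm : ∀ u v, w u v = w v u) (hdiag : ∀ u, w u u = 0)
    (hnonneg : ∀ u v, 0 ≤ w u v) (ν : V → ℝ) (hν : ∀ v, 0 < ν v)
    (p : ℝ) (hp : 1 ≤ p)
    (A B : Finset V) (hdisj : Disjoint A B)
    (K D : ℝ) (hKpos : 0 < K)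
    (hK : ∀ v ∈ B, K * ν v ≤ ∑ u ∈ A, w u v)
    (hD : ∀ v ∈ A, ∑ u ∈ B, w u v ≤ D * ν v)
    (f : V → ℂ) :
    (∑ v ∈ B, ‖f v‖ ^ p * ν v) ^ (1 / p) ≤
      (D / K) ^ (1 / p) * (∑ v ∈ A, ‖f v‖ ^ p * ν v) ^ (1 / p) +
        (K⁻¹ * ∑ u ∈ B, ∑ v ∈ A, ‖f u - f v‖ ^ p * w u v) ^ (1 / p) :=
  statement3_general w hsymm hnonneg ν hν p hp A B K D hKpos hK hD f
end

section
/- Corollary (Plancherel–Polya lower frame bound): Let X ⊆ ℓ^p_ν(G) be a subspace such that ‖∇_w f‖_p ≤ ε ‖f‖_{p,ν} for all f ∈ X. Let S be an admissible partition with constants a_{S,p} = (∑_{m=0}^{n} ∏_{j=0}^{m−1} D_j/K_j)^{1/p} and δ_{S,p} as in Theorem 1.1. If ε δ_{S,p} < 1, then for all f ∈ X: ((1 − ε δ_{S,p})/a_{S,p}) ‖f‖_{p,ν} ≤ ‖f|_{S₀}‖_{p,ν} ≤ ‖f‖_{p,ν}. -/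
open Finset

theorem div_mul_le_of_le_add_mul_of_le_mul {N N₀ G a δ ε : ℝ} (ha : 0 < a) (hδ : 0 ≤ δ)
    (hG : G ≤ ε * N) (hN : N ≤ a * N₀ + δ * G) :
    ((1 - ε * δ) / a) * N ≤ N₀ := by
  have hdiff : (1 - ε * δ) * N ≤ a * N₀ := by nlinarith [mul_le_mul_of_nonneg_left hG hδ]
  rw [div_mul_eq_mul_div, div_le_iff₀ ha]
  linarith

theorem sqrt_weighted_sum_le_of_subset {V : Type*} [Fintype V] {ν : V → ℝ} (hν : ∀ v, 0 ≤ ν v)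
    (f : V → ℂ) (S : Finset V) :
    Real.sqrt (∑ v ∈ S, ‖f v‖ ^ 2 * ν v) ≤ Real.sqrt (∑ v, ‖f v‖ ^ 2 * ν v) :=
  Real.sqrt_le_sqrt <| sum_le_sum_of_subset_of_nonneg (subset_univ S) fun v _ _ =>
    mul_nonneg (sq_nonneg _) (hν v)

theorem statement6_general {V : Type*} [Fintype V] (w : V → V → ℝ)
    (ν : V → ℝ) (hν : ∀ v, 0 < ν v)
    (S₀ : Finset V) (X : Submodule ℂ (V → ℂ))
    (a δ ε : ℝ) (ha : 0 < a) (hδ : 0 ≤ δ)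
    (hBern : ∀ f ∈ X,
      Real.sqrt (∑ u, ∑ v, ‖f u - f v‖ ^ 2 * w u v) ≤
        ε * Real.sqrt (∑ v, ‖f v‖ ^ 2 * ν v))
    (hPoincare : ∀ f ∈ X,
      Real.sqrt (∑ v, ‖f v‖ ^ 2 * ν v) ≤
        a * Real.sqrt (∑ v ∈ S₀, ‖f v‖ ^ 2 * ν v) +
          δ * Real.sqrt (∑ u, ∑ v, ‖f u - f v‖ ^ 2 * w u v)) :
    ∀ f ∈ X,
      ((1 - ε * δ) / a) * Real.sqrt (∑ v, ‖f v‖ ^ 2 * ν v) ≤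
          Real.sqrt (∑ v ∈ S₀, ‖f v‖ ^ 2 * ν v) ∧
        Real.sqrt (∑ v ∈ S₀, ‖f v‖ ^ 2 * ν v) ≤
          Real.sqrt (∑ v, ‖f v‖ ^ 2 * ν v) :=
  fun f hf =>
    ⟨div_mul_le_of_le_add_mul_of_le_mul ha hδ (hBern f hf) (hPoincare f hf),
      sqrt_weighted_sum_le_of_subset (fun v => (hν v).le) f S₀⟩

/-- Plancherel–Polya lower frame bound (case p = 2), assuming the
Poincaré inequality `‖f‖_{2,ν} ≤ a ‖f|_{S₀}‖_{2,ν} + δ ‖∇_w f‖₂` on the subspace `X`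
together with the Bernstein-type bound `‖∇_w f‖₂ ≤ ε ‖f‖_{2,ν}`. -/
theorem statement6 {V : Type*} [Fintype V] (w : V → V → ℝ)
    (hsymm : ∀ u v, w u v = w v u) (hdiag : ∀ u, w u u = 0)
    (hnonneg : ∀ u v, 0 ≤ w u v) (ν : V → ℝ) (hν : ∀ v, 0 < ν v)
    (S₀ : Finset V) (X : Submodule ℂ (V → ℂ))
    (a δ ε : ℝ) (ha : 0 < a) (hδ : 0 ≤ δ) (hε : 0 ≤ ε) (hεδ : ε * δ < 1)
    (hBern : ∀ f ∈ X,
      Real.sqrt (∑ u, ∑ v, ‖f u - f v‖ ^ 2 * w u v) ≤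
        ε * Real.sqrt (∑ v, ‖f v‖ ^ 2 * ν v))
    (hPoincare : ∀ f ∈ X,
      Real.sqrt (∑ v, ‖f v‖ ^ 2 * ν v) ≤
        a * Real.sqrt (∑ v ∈ S₀, ‖f v‖ ^ 2 * ν v) +
          δ * Real.sqrt (∑ u, ∑ v, ‖f u - f v‖ ^ 2 * w u v)) :
    ∀ f ∈ X,
      ((1 - ε * δ) / a) * Real.sqrt (∑ v, ‖f v‖ ^ 2 * ν v) ≤
          Real.sqrt (∑ v ∈ S₀, ‖f v‖ ^ 2 * ν v) ∧
        Real.sqrt (∑ v ∈ S₀, ‖f v‖ ^ 2 * ν v) ≤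
          Real.sqrt (∑ v, ‖f v‖ ^ 2 * ν v) :=
  statement6_general w ν hν S₀ X a δ ε ha hδ hBern hPoincare
end

section
/- Corollary (Poincaré inequality for functions vanishing on S₀, two-set case, p=2): Let V(G) = S₀ ∪ S₁ be a partition with K₀ = inf_{v∈S₁} w_{S₀}(v)/ν(v) > 0. If f ∈ ℓ²_ν(G) satisfies f|_{S₀} = 0, then ‖f‖_{2,ν} ≤ K₀^{−1/2} ‖∇_w f‖₂. -/
open Finset

section Poincare

variable {V E : Type*} [Fintype V] [SeminormedAddCommGroup E]

lemma sum_sum_sq_norm_sub_mul_le_of_subset {w : V → V → ℝ} (hnonneg : ∀ u v, 0 ≤ w u v)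
    (S T : Finset V) (f : V → E) :
    ∑ v ∈ T, ∑ u ∈ S, ‖f u - f v‖ ^ 2 * w u v ≤ ∑ u, ∑ v, ‖f u - f v‖ ^ 2 * w u v := by
  have hterm : ∀ u v, 0 ≤ ‖f u - f v‖ ^ 2 * w u v := fun u v =>
    mul_nonneg (sq_nonneg _) (hnonneg u v)
  rw [sum_comm]
  calc ∑ u ∈ S, ∑ v ∈ T, ‖f u - f v‖ ^ 2 * w u v
      ≤ ∑ u ∈ S, ∑ v, ‖f u - f v‖ ^ 2 * w u v :=
        sum_le_sum fun u _ => sum_le_sum_of_subset_of_nonneg (subset_univ _) fun v _ _ => hterm u v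
    _ ≤ ∑ u, ∑ v, ‖f u - f v‖ ^ 2 * w u v :=
        sum_le_sum_of_subset_of_nonneg (subset_univ _) fun u _ _ =>
          sum_nonneg fun v _ => hterm u v

/-- As `f` vanishes on `S₀`, `‖f v‖ = ‖f u - f v‖` for `u ∈ S₀`, so the mass of `f` on `S₁` is
bounded by the energy of the edges between `S₀` and `S₁`. -/
lemma mul_sum_sq_norm_mul_le_dirichlet_of_eq_zero_on [DecidableEq V] {w : V → V → ℝ}
    (hnonneg : ∀ u v, 0 ≤ w u v) {ν : V → ℝ} {S₀ S₁ : Finset V} (hdisj : Disjoint S₀ S₁)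
    (hcover : S₀ ∪ S₁ = univ) {K : ℝ} (hK : ∀ v ∈ S₁, K * ν v ≤ ∑ u ∈ S₀, w u v)
    {f : V → E} (hf : ∀ v ∈ S₀, f v = 0) :
    K * ∑ v, ‖f v‖ ^ 2 * ν v ≤ ∑ u, ∑ v, ‖f u - f v‖ ^ 2 * w u v := by
  have hmass : K * ∑ v, ‖f v‖ ^ 2 * ν v = ∑ v ∈ S₁, ‖f v‖ ^ 2 * (K * ν v) := by
    rw [mul_sum, ← hcover, sum_union hdisj, sum_eq_zero fun v hv => by simp [hf v hv], zero_add]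
    exact sum_congr rfl fun v _ => by ring
  have hcut : ∀ v, ‖f v‖ ^ 2 * ∑ u ∈ S₀, w u v = ∑ u ∈ S₀, ‖f u - f v‖ ^ 2 * w u v :=
    fun v => by
      rw [mul_sum]
      exact sum_congr rfl fun u hu => by rw [hf u hu, zero_sub, norm_neg]
  calc K * ∑ v, ‖f v‖ ^ 2 * ν v
      = ∑ v ∈ S₁, ‖f v‖ ^ 2 * (K * ν v) := hmass
    _ ≤ ∑ v ∈ S₁, ∑ u ∈ S₀, ‖f u - f v‖ ^ 2 * w u v :=
        sum_le_sum fun v hv => (hcut v) ▸ mul_le_mul_of_nonneg_left (hK v hv) (sq_nonneg _)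
    _ ≤ ∑ u, ∑ v, ‖f u - f v‖ ^ 2 * w u v :=
        sum_sum_sq_norm_sub_mul_le_of_subset hnonneg S₀ S₁ f

end Poincare

lemma sqrt_le_one_div_sqrt_mul_sqrt_of_mul_le {K A B : ℝ} (hK : 0 < K) (h : K * A ≤ B) :
    √A ≤ 1 / √K * √B := by
  calc √A ≤ √(B / K) := Real.sqrt_le_sqrt ((le_div_iff₀' hK).2 h)
    _ = 1 / √K * √B := by rw [Real.sqrt_div' B hK.le, div_eq_inv_mul, one_div]

theorem statement7_general {V : Type*} [Fintype V] [DecidableEq V] (w : V → V → ℝ)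
    (hnonneg : ∀ u v, 0 ≤ w u v) (ν : V → ℝ)
    (S₀ S₁ : Finset V) (hdisj : Disjoint S₀ S₁) (hcover : S₀ ∪ S₁ = Finset.univ)
    (K₀ : ℝ) (hK₀pos : 0 < K₀)
    (hK₀ : ∀ v ∈ S₁, K₀ * ν v ≤ ∑ u ∈ S₀, w u v)
    (f : V → ℂ) (hf : ∀ v ∈ S₀, f v = 0) :
    Real.sqrt (∑ v, ‖f v‖ ^ 2 * ν v) ≤
      (1 / Real.sqrt K₀) *
        Real.sqrt (∑ u, ∑ v, ‖f u - f v‖ ^ 2 * w u v) :=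
  sqrt_le_one_div_sqrt_mul_sqrt_of_mul_le hK₀pos
    (mul_sum_sq_norm_mul_le_dirichlet_of_eq_zero_on hnonneg hdisj hcover hK₀ hf)

/-- Poincaré inequality for functions vanishing on `S₀`,
two-set partition, p = 2. -/
theorem statement7 {V : Type*} [Fintype V] [DecidableEq V] (w : V → V → ℝ)
    (hsymm : ∀ u v, w u v = w v u) (hdiag : ∀ u, w u u = 0)
    (hnonneg : ∀ u v, 0 ≤ w u v) (ν : V → ℝ) (hν : ∀ v, 0 < ν v)
    (S₀ S₁ : Finset V) (hdisj : Disjoint S₀ S₁) (hcover : S₀ ∪ S₁ = Finset.univ)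
    (K₀ : ℝ) (hK₀pos : 0 < K₀)
    (hK₀ : ∀ v ∈ S₁, K₀ * ν v ≤ ∑ u ∈ S₀, w u v)
    (f : V → ℂ) (hf : ∀ v ∈ S₀, f v = 0) :
    Real.sqrt (∑ v, ‖f v‖ ^ 2 * ν v) ≤
      (1 / Real.sqrt K₀) *
        Real.sqrt (∑ u, ∑ v, ‖f u - f v‖ ^ 2 * w u v) :=
  statement7_general w hnonneg ν S₀ S₁ hdisj hcover K₀ hK₀pos hK₀ f hf
end

section
/- Corollary (Poincaré inequality for functions supported on S₀, two-set case, p=2): Let S₀, S₁ ⊆ V(G) be disjoint, with K̂₀ = inf_{v∈S₀} w_{S₁}(v)/ν(v) > 0 and D̂₀ = sup_{v∈S₁} w_{S₀}(v)/ν(v) > 0, and suppose K̂₀/D̂₀ > 0. If f ∈ ℓ²_ν(G) vanishes outside S₀, then ‖f‖_{2,ν} ≤ (D̂₀^{−1/2} / ((1 + K̂₀/D̂₀)^{1/2} − 1)) ‖∇_w f‖₂. -/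
/-!
Each vertex `v ∈ S₀` sends edge weight at least `K₀ ν(v)` into `S₁`, where `f` vanishes,
so these edges alone give `K₀ ‖f‖² ≤ ‖∇f‖²`. The stated constant is at least `K₀^{-1/2}`, since
`√D₀ (√(1 + K₀/D₀) - 1) = √(D₀ + K₀) - √D₀ ≤ √K₀`.
-/

open Finset

lemma Real.sqrt_add_le_add_sqrt {x y : ℝ} (hx : 0 ≤ x) (hy : 0 ≤ y) :
    √(x + y) ≤ √x + √y := by
  rw [Real.sqrt_le_iff]
  refine ⟨by positivity, ?_⟩
  nlinarith [Real.sq_sqrt hx, Real.sq_sqrt hy, Real.sqrt_nonneg x, Real.sqrt_nonneg y]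

lemma Real.one_div_sqrt_le_div_sqrt_one_add_div_sub_one {K D : ℝ} (hK : 0 < K) (hD : 0 < D) :
    1 / √K ≤ (1 / √D) / (√(1 + K / D) - 1) := by
  have hgap : √D * (√(1 + K / D) - 1) = √(D + K) - √D := by
    rw [mul_sub, mul_one, ← Real.sqrt_mul hD.le, mul_add, mul_one, mul_div_cancel₀ K hD.ne']
  have hpos : 0 < √(D + K) - √D :=
    sub_pos.mpr (Real.sqrt_lt_sqrt hD.le (lt_add_of_pos_right D hK))
  rw [div_div, hgap]
  exact one_div_le_one_div_of_le hpos
    (sub_le_iff_le_add'.mpr (Real.sqrt_add_le_add_sqrt hD.le hK.le))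

lemma mul_sum_norm_sq_le_sum_sum_norm_sub_sq {V E : Type*} [Fintype V]
    [SeminormedAddCommGroup E] (w : V → V → ℝ) (hw : ∀ u v, 0 ≤ w u v) (ν : V → ℝ)
    {S₀ S₁ : Finset V} (hdisj : Disjoint S₀ S₁) {K : ℝ} (hK : ∀ v ∈ S₀, K * ν v ≤ ∑ u ∈ S₁, w u v)
    {f : V → E} (hf : ∀ v, v ∉ S₀ → f v = 0) :
    K * ∑ v, ‖f v‖ ^ 2 * ν v ≤ ∑ u, ∑ v, ‖f u - f v‖ ^ 2 * w u v := by
  have hterm : ∀ u v, 0 ≤ ‖f u - f v‖ ^ 2 * w u v := fun u v => by have := hw u v; positivity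
  calc K * ∑ v, ‖f v‖ ^ 2 * ν v = ∑ v ∈ S₀, ‖f v‖ ^ 2 * (K * ν v) := by
        rw [mul_sum, ← sum_subset (subset_univ S₀) fun v _ hv => by simp [hf v hv]]
        exact sum_congr rfl fun v _ => by ring
    _ ≤ ∑ v ∈ S₀, ∑ u ∈ S₁, ‖f u - f v‖ ^ 2 * w u v := by
        refine sum_le_sum fun v hv => ?_
        have hS₁ : ∀ u ∈ S₁, f u = 0 := fun u hu => hf u (disjoint_right.mp hdisj hu)
        rw [sum_congr rfl fun u hu => by rw [hS₁ u hu, zero_sub, norm_neg], ← mul_sum]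
        exact mul_le_mul_of_nonneg_left (hK v hv) (sq_nonneg _)
    _ = ∑ u ∈ S₁, ∑ v ∈ S₀, ‖f u - f v‖ ^ 2 * w u v := sum_comm
    _ ≤ ∑ u ∈ S₁, ∑ v, ‖f u - f v‖ ^ 2 * w u v := sum_le_sum fun u _ =>
        sum_le_sum_of_subset_of_nonneg (subset_univ S₀) fun v _ _ => hterm u v
    _ ≤ ∑ u, ∑ v, ‖f u - f v‖ ^ 2 * w u v :=
        sum_le_sum_of_subset_of_nonneg (subset_univ S₁) fun u _ _ =>
          sum_nonneg fun v _ => hterm u v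

theorem statement8_general {V : Type*} [Fintype V] (w : V → V → ℝ)
    (hnonneg : ∀ u v, 0 ≤ w u v) (ν : V → ℝ)
    (S₀ S₁ : Finset V) (hdisj : Disjoint S₀ S₁)
    (K₀ D₀ : ℝ) (hK₀pos : 0 < K₀) (hD₀pos : 0 < D₀)
    (hK₀ : ∀ v ∈ S₀, K₀ * ν v ≤ ∑ u ∈ S₁, w u v)
    (f : V → ℂ) (hf : ∀ v, v ∉ S₀ → f v = 0) :
    Real.sqrt (∑ v, ‖f v‖ ^ 2 * ν v) ≤
      ((1 / Real.sqrt D₀) / (Real.sqrt (1 + K₀ / D₀) - 1)) *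
        Real.sqrt (∑ u, ∑ v, ‖f u - f v‖ ^ 2 * w u v) := by
  have hkey := mul_sum_norm_sq_le_sum_sum_norm_sub_sq w hnonneg ν hdisj hK₀ hf
  calc √(∑ v, ‖f v‖ ^ 2 * ν v)
      ≤ √((∑ u, ∑ v, ‖f u - f v‖ ^ 2 * w u v) / K₀) :=
        Real.sqrt_le_sqrt ((le_div_iff₀' hK₀pos).mpr hkey)
    _ = 1 / √K₀ * √(∑ u, ∑ v, ‖f u - f v‖ ^ 2 * w u v) := by
        rw [Real.sqrt_div' _ hK₀pos.le, div_eq_inv_mul, one_div]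
    _ ≤ _ := mul_le_mul_of_nonneg_right
        (Real.one_div_sqrt_le_div_sqrt_one_add_div_sub_one hK₀pos hD₀pos) (Real.sqrt_nonneg _)

/-- Poincaré inequality for functions supported on `S₀`,
two-set case, p = 2. -/
theorem statement8 {V : Type*} [Fintype V] (w : V → V → ℝ)
    (hsymm : ∀ u v, w u v = w v u) (hdiag : ∀ u, w u u = 0)
    (hnonneg : ∀ u v, 0 ≤ w u v) (ν : V → ℝ) (hν : ∀ v, 0 < ν v)
    (S₀ S₁ : Finset V) (hdisj : Disjoint S₀ S₁)
    (K₀ D₀ : ℝ) (hK₀pos : 0 < K₀) (hD₀pos : 0 < D₀)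
    (hK₀ : ∀ v ∈ S₀, K₀ * ν v ≤ ∑ u ∈ S₁, w u v)
    (hD₀ : ∀ v ∈ S₁, ∑ u ∈ S₀, w u v ≤ D₀ * ν v)
    (f : V → ℂ) (hf : ∀ v, v ∉ S₀ → f v = 0) :
    Real.sqrt (∑ v, ‖f v‖ ^ 2 * ν v) ≤
      ((1 / Real.sqrt D₀) / (Real.sqrt (1 + K₀ / D₀) - 1)) *
        Real.sqrt (∑ u, ∑ v, ‖f u - f v‖ ^ 2 * w u v) :=
  statement8_general w hnonneg ν S₀ S₁ hdisj K₀ D₀ hK₀pos hD₀pos hK₀ f hf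
end

section
/- Sampling estimate for Paley–Wiener functions (two-set partition): Let V(G) = S₀ ∪ S₁ (disjoint) with K₀ = inf_{v∈S₁} w_{S₀}(v) > 0 and D₀ = sup_{v∈S₀} w_{S₁}(v) < ∞. If 0 < ω < K₀/2, then for every f ∈ PW_ω(L_w): ‖f‖₂ ≤ (1 − √(2ω/K₀))^{−1} (1 + D₀/K₀)^{1/2} ‖f|_{S₀}‖₂. In particular S₀ is a uniqueness set for PW_ω(L_w). -/
/-!
On `PW_ω` the Rayleigh quotient of `L_w` is at most `ω`, because eigenspaces of a symmetric
operator are orthogonal; by Green's formula this bounds the Dirichlet energy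
`∑ᵥ ∑ᵤ w(v,u) ‖f v - f u‖²` by `2ω ‖f‖²`.

Every vertex of `S₁` has weight at least `K₀` towards `S₀`, so `√K₀ ‖f|S₁‖` is at most the
weighted ℓ²-norm of `f v` over the edges `(v, u) ∈ S₁ × S₀`. Writing `f v = f u + (f v - f u)`,
Minkowski bounds this by `√D₀ ‖f|S₀‖ + √(2ω) ‖f‖`, i.e. `‖f|S₁‖ ≤ √(D₀/K₀) ‖f|S₀‖ + α ‖f‖`
with `α = √(2ω/K₀) < 1`. Minkowski in `ℝ²`, applied to `‖f‖² = ‖f|S₀‖² + ‖f|S₁‖²`, then gives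
`‖f‖ ≤ √(1 + D₀/K₀) ‖f|S₀‖ + α ‖f‖`.
-/

open Finset Module.End RCLike ComplexConjugate

theorem LinearMap.IsSymmetric.re_inner_map_self_le {𝕜 E : Type*} [RCLike 𝕜]
    [NormedAddCommGroup E] [InnerProductSpace 𝕜 E] {T : E →ₗ[𝕜] E} (hT : T.IsSymmetric)
    {ω : ℝ} {x : E} (hx : x ∈ ⨆ μ : Set.Iic ω, eigenspace T ((μ : ℝ) : 𝕜)) :
    re (inner 𝕜 (T x) x) ≤ ω * ‖x‖ ^ 2 := by
  obtain ⟨c, hc, rfl⟩ := (Submodule.mem_iSup_iff_exists_finsupp _ x).1 hx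
  have hO := hT.orthogonalFamily_eigenspaces.comp
    (f := fun μ : Set.Iic ω => ((μ : ℝ) : 𝕜)) fun μ ν h => Subtype.ext (ofReal_injective h)
  have hTc : ∀ μ, T (c μ) = ((μ : ℝ) : 𝕜) • c μ := fun μ => mem_eigenspace_iff.1 (hc μ)
  have hinner := hO.inner_sum
    (fun μ => ⟨T (c μ), hTc μ ▸ Submodule.smul_mem _ _ (hc μ)⟩) (fun μ => ⟨c μ, hc μ⟩) c.support
  have hnorm := hO.norm_sum (fun μ => ⟨c μ, hc μ⟩) c.support
  simp only [Submodule.coe_subtypeₗᵢ, Submodule.coe_subtype] at hinner hnorm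
  rw [Finsupp.sum, map_sum, hinner, hnorm, map_sum, mul_sum]
  refine sum_le_sum fun μ _ => ?_
  simp only [Submodule.coe_inner, Submodule.coe_norm, hTc, inner_smul_left, conj_ofReal,
    inner_self_eq_norm_sq_to_K]
  norm_cast
  exact mul_le_mul_of_nonneg_right μ.2 (sq_nonneg _)

section GraphLaplacian

variable {V : Type*} [Fintype V]

theorem sum_sum_mul_sub_eq_two_mul_of_antisymm {R : Type*} [CommRing R] (a : V → V → R)
    (ha : ∀ u v, a u v = -a v u) (g : V → R) :
    ∑ v, ∑ u, a v u * (g v - g u) = 2 * ∑ v, ∑ u, a v u * g v := by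
  have hswap : ∑ v, ∑ u, a v u * g u = -∑ v, ∑ u, a v u * g v := by
    rw [sum_comm, ← sum_neg_distrib]
    refine sum_congr rfl fun v _ => ?_
    rw [← sum_neg_distrib]
    exact sum_congr rfl fun u _ => by rw [ha]; ring
  simp only [mul_sub, sum_sub_distrib, hswap]
  ring

noncomputable def graphLaplacian (w : V → V → ℝ) :
    EuclideanSpace ℂ V →ₗ[ℂ] EuclideanSpace ℂ V where
  toFun f := WithLp.toLp 2 fun v => ∑ u, (f v - f u) * (w v u : ℂ)
  map_add' f g := by
    ext v
    simp only [PiLp.add_apply, ← sum_add_distrib]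
    exact sum_congr rfl fun u _ => by ring
  map_smul' c f := by
    ext v
    simp only [PiLp.smul_apply, smul_eq_mul, RingHom.id_apply, mul_sum]
    exact sum_congr rfl fun u _ => by ring

@[simp]
theorem graphLaplacian_apply (w : V → V → ℝ) (f : EuclideanSpace ℂ V) (v : V) :
    graphLaplacian w f v = ∑ u, (f v - f u) * (w v u : ℂ) := rfl

variable {w : V → V → ℝ}

theorem inner_graphLaplacian_left (hw : ∀ u v, w u v = w v u) (f g : EuclideanSpace ℂ V) :
    inner ℂ (graphLaplacian w f) g =
      (∑ v, ∑ u, (w v u : ℂ) * (conj (f v - f u) * (g v - g u))) / 2 := by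
  rw [eq_div_iff two_ne_zero, mul_comm]
  simp only [← mul_assoc]
  rw [sum_sum_mul_sub_eq_two_mul_of_antisymm _ fun u v => ?_]
  · simp only [PiLp.inner_apply, graphLaplacian_apply, RCLike.inner_apply', map_sum, sum_mul]
    congr 1
    refine sum_congr rfl fun v _ => sum_congr rfl fun u _ => ?_
    rw [map_mul, Complex.conj_ofReal]
    ring
  · rw [hw, ← neg_sub (f v), map_neg]
    ring

theorem graphLaplacian_isSymmetric (hw : ∀ u v, w u v = w v u) :
    (graphLaplacian w).IsSymmetric := fun f g => by
  rw [inner_graphLaplacian_left hw, ← inner_conj_symm, inner_graphLaplacian_left hw]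
  simp only [map_div₀, map_sum, map_mul, Complex.conj_ofReal, Complex.conj_conj, map_ofNat]
  congr 1
  exact sum_congr rfl fun v _ => sum_congr rfl fun u _ => by ring

theorem re_inner_graphLaplacian_self (hw : ∀ u v, w u v = w v u) (f : EuclideanSpace ℂ V) :
    re (inner ℂ (graphLaplacian w f) f) = (∑ v, ∑ u, w v u * ‖f v - f u‖ ^ 2) / 2 := by
  rw [inner_graphLaplacian_left hw]
  simp only [RCLike.conj_mul, RCLike.re_to_complex, Complex.div_ofNat_re, Complex.re_sum,
    Complex.re_ofReal_mul]
  norm_cast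

theorem sum_sum_mul_norm_sub_sq_le_of_mem_span (hw : ∀ u v, w u v = w v u) {ω : ℝ} {f : V → ℂ}
    (hf : f ∈ Submodule.span ℂ {g : V → ℂ | ∃ μ : ℝ, 0 ≤ μ ∧ μ ≤ ω ∧
      ∀ v, (∑ u, (g v - g u) * (w v u : ℂ)) = (μ : ℂ) * g v}) :
    ∑ v, ∑ u, w v u * ‖f v - f u‖ ^ 2 ≤ 2 * ω * ∑ v, ‖f v‖ ^ 2 := by
  have hspan : Submodule.span ℂ {g : V → ℂ | ∃ μ : ℝ, 0 ≤ μ ∧ μ ≤ ω ∧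
      ∀ v, (∑ u, (g v - g u) * (w v u : ℂ)) = (μ : ℂ) * g v} ≤
      (⨆ μ : Set.Iic ω, eigenspace (graphLaplacian w) ((μ : ℝ) : ℂ)).comap
        (WithLp.linearEquiv 2 ℂ (V → ℂ)).symm.toLinearMap := by
    rw [Submodule.span_le]
    rintro g ⟨μ, -, hμ, hg⟩
    refine Submodule.mem_iSup_of_mem ⟨μ, hμ⟩ (mem_eigenspace_iff.2 ?_)
    ext v
    exact hg v
  have hray := (graphLaplacian_isSymmetric hw).re_inner_map_self_le (hspan hf)
  rw [re_inner_graphLaplacian_self hw, EuclideanSpace.norm_sq_eq] at hray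
  simp only [LinearEquiv.coe_coe, WithLp.coe_symm_linearEquiv, WithLp.ofLp_toLp] at hray
  linarith

end GraphLaplacian

theorem sqrt_sum_mul_sq_le_of_le_add {ι : Type*} (s : Finset ι) {a x y z : ι → ℝ}
    (ha : ∀ i ∈ s, 0 ≤ a i) (hx : ∀ i ∈ s, 0 ≤ x i) (hxyz : ∀ i ∈ s, x i ≤ y i + z i) :
    √(∑ i ∈ s, a i * x i ^ 2) ≤ √(∑ i ∈ s, a i * y i ^ 2) + √(∑ i ∈ s, a i * z i ^ 2) := by
  have hsq : ∀ (t : ι → ℝ), ∀ i ∈ s, (√(a i) * t i) ^ 2 = a i * t i ^ 2 := fun t i hi => by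
    rw [mul_pow, Real.sq_sqrt (ha i hi)]
  have hcs := Real.sum_mul_le_sqrt_mul_sqrt s (fun i => √(a i) * y i) (fun i => √(a i) * z i)
  simp only [sum_congr rfl (hsq _)] at hcs
  have hY := Real.sq_sqrt (sum_nonneg fun i hi => mul_nonneg (ha i hi) (sq_nonneg (y i)))
  have hZ := Real.sq_sqrt (sum_nonneg fun i hi => mul_nonneg (ha i hi) (sq_nonneg (z i)))
  refine Real.sqrt_le_iff.2 ⟨by positivity, ?_⟩
  calc ∑ i ∈ s, a i * x i ^ 2
      ≤ ∑ i ∈ s, (a i * y i ^ 2 + 2 * ((√(a i) * y i) * (√(a i) * z i)) + a i * z i ^ 2) :=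
        sum_le_sum fun i hi => by
          rw [mul_mul_mul_comm, Real.mul_self_sqrt (ha i hi)]
          have := pow_le_pow_left₀ (hx i hi) (hxyz i hi) 2
          nlinarith [ha i hi]
    _ ≤ _ := by
      rw [sum_add_distrib, sum_add_distrib, ← mul_sum]
      nlinarith

theorem sqrt_sq_add_sq_add_le (x y : ℝ) {z : ℝ} (hz : 0 ≤ z) :
    √(x ^ 2 + (y + z) ^ 2) ≤ √(x ^ 2 + y ^ 2) + z := by
  have hy : y ≤ √(x ^ 2 + y ^ 2) := Real.le_sqrt_of_sq_le (by nlinarith)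
  have hsq := Real.sq_sqrt (by positivity : 0 ≤ x ^ 2 + y ^ 2)
  exact Real.sqrt_le_iff.2 ⟨by positivity, by nlinarith⟩

theorem sqrt_sq_add_sq_le_of_le_mul_add {A B c α : ℝ} (hA : 0 ≤ A) (hB : 0 ≤ B)
    (hα₀ : 0 ≤ α) (hα₁ : α < 1) (h : B ≤ c * A + α * √(A ^ 2 + B ^ 2)) :
    √(A ^ 2 + B ^ 2) ≤ (1 - α)⁻¹ * √(1 + c ^ 2) * A := by
  set N := √(A ^ 2 + B ^ 2)
  have hN : N ≤ √(1 + c ^ 2) * A + α * N :=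
    calc N ≤ √(A ^ 2 + (c * A + α * N) ^ 2) :=
          Real.sqrt_le_sqrt (add_le_add_right (pow_le_pow_left₀ hB h 2) _)
      _ ≤ √(A ^ 2 + (c * A) ^ 2) + α * N := sqrt_sq_add_sq_add_le _ _ (by positivity)
      _ = √(1 + c ^ 2) * A + α * N := by
        rw [← Real.sqrt_sq hA, ← Real.sqrt_mul (by positivity), Real.sqrt_sq hA]
        ring_nf
  rw [mul_assoc, le_inv_mul_iff₀ (by linarith)]
  linarith

section Sampling

variable {V E : Type*} [Fintype V] [SeminormedAddCommGroup E]
  {w : V → V → ℝ} {S₀ S₁ : Finset V} {K₀ D₀ : ℝ}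

theorem sqrt_mul_sqrt_sum_norm_sq_le (hw : ∀ u v, w u v = w v u) (hw₀ : ∀ u v, 0 ≤ w u v)
    (hK₀ : ∀ v ∈ S₁, K₀ ≤ ∑ u ∈ S₀, w u v) (hD₀ : ∀ v ∈ S₀, ∑ u ∈ S₁, w u v ≤ D₀)
    (f : V → E) :
    √K₀ * √(∑ v ∈ S₁, ‖f v‖ ^ 2) ≤
      √D₀ * √(∑ v ∈ S₀, ‖f v‖ ^ 2) + √(∑ v, ∑ u, w v u * ‖f v - f u‖ ^ 2) := by
  have hpair : ∀ g : V → V → ℝ, ∑ v ∈ S₁, ∑ u ∈ S₀, w v u * g v u =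
      ∑ p ∈ S₁ ×ˢ S₀, w p.1 p.2 * g p.1 p.2 := fun g =>
    (sum_product S₁ S₀ fun p => w p.1 p.2 * g p.1 p.2).symm
  have hK : K₀ * ∑ v ∈ S₁, ‖f v‖ ^ 2 ≤ ∑ v ∈ S₁, ∑ u ∈ S₀, w v u * ‖f v‖ ^ 2 := by
    rw [mul_sum]
    refine sum_le_sum fun v hv => ?_
    rw [← sum_mul]
    simp only [hw v]
    exact mul_le_mul_of_nonneg_right (hK₀ v hv) (sq_nonneg _)
  have hD : ∑ v ∈ S₁, ∑ u ∈ S₀, w v u * ‖f u‖ ^ 2 ≤ D₀ * ∑ u ∈ S₀, ‖f u‖ ^ 2 := by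
    rw [sum_comm, mul_sum]
    exact sum_le_sum fun u hu => by
      rw [← sum_mul]
      exact mul_le_mul_of_nonneg_right (hD₀ u hu) (sq_nonneg _)
  have hcut : ∑ v ∈ S₁, ∑ u ∈ S₀, w v u * ‖f v - f u‖ ^ 2 ≤
      ∑ v, ∑ u, w v u * ‖f v - f u‖ ^ 2 := by
    have hterm v u : 0 ≤ w v u * ‖f v - f u‖ ^ 2 := mul_nonneg (hw₀ v u) (sq_nonneg _)
    refine (sum_le_sum fun v _ => ?_).trans
      (sum_le_sum_of_subset_of_nonneg (subset_univ _) fun v _ _ => sum_nonneg fun u _ => hterm v u)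
    exact sum_le_sum_of_subset_of_nonneg (subset_univ _) fun u _ _ => hterm v u
  calc √K₀ * √(∑ v ∈ S₁, ‖f v‖ ^ 2)
      ≤ √(∑ v ∈ S₁, ∑ u ∈ S₀, w v u * ‖f v‖ ^ 2) := by
        rw [← Real.sqrt_mul' _ (sum_nonneg fun v _ => sq_nonneg _)]
        exact Real.sqrt_le_sqrt hK
    _ ≤ √(∑ v ∈ S₁, ∑ u ∈ S₀, w v u * ‖f u‖ ^ 2) +
          √(∑ v ∈ S₁, ∑ u ∈ S₀, w v u * ‖f v - f u‖ ^ 2) := by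
        simp only [hpair]
        refine sqrt_sum_mul_sq_le_of_le_add _ (fun p _ => hw₀ _ _) (fun p _ => norm_nonneg _)
          fun p _ => ?_
        simpa using norm_add_le (f p.2) (f p.1 - f p.2)
    _ ≤ √D₀ * √(∑ v ∈ S₀, ‖f v‖ ^ 2) + √(∑ v, ∑ u, w v u * ‖f v - f u‖ ^ 2) := by
        rw [← Real.sqrt_mul' _ (sum_nonneg fun v _ => sq_nonneg _)]
        gcongr

theorem sqrt_sum_norm_sq_le_of_dirichlet_le [DecidableEq V] (hw : ∀ u v, w u v = w v u)
    (hw₀ : ∀ u v, 0 ≤ w u v) (hdisj : Disjoint S₀ S₁) (hcover : S₀ ∪ S₁ = univ) (hK₀pos : 0 < K₀)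
    (hK₀ : ∀ v ∈ S₁, K₀ ≤ ∑ u ∈ S₀, w u v) (hD₀ : ∀ v ∈ S₀, ∑ u ∈ S₁, w u v ≤ D₀)
    {Λ : ℝ} (hΛ : Λ < K₀) {f : V → E}
    (hf : ∑ v, ∑ u, w v u * ‖f v - f u‖ ^ 2 ≤ Λ * ∑ v, ‖f v‖ ^ 2) :
    √(∑ v, ‖f v‖ ^ 2) ≤ (1 - √(Λ / K₀))⁻¹ * √(1 + D₀ / K₀) * √(∑ v ∈ S₀, ‖f v‖ ^ 2) := by
  rcases S₀.eq_empty_or_nonempty with rfl | ⟨v₀, hv₀⟩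
  · have hS₁ : S₁ = ∅ := eq_empty_of_forall_notMem fun v hv => by
      simpa using hK₀pos.trans_le (hK₀ v hv)
    simp [← hcover, hS₁]
  have hD₀nn : 0 ≤ D₀ := (sum_nonneg fun u _ => hw₀ u v₀).trans (hD₀ v₀ hv₀)
  set A := √(∑ v ∈ S₀, ‖f v‖ ^ 2)
  set B := √(∑ v ∈ S₁, ‖f v‖ ^ 2)
  have hAB : ∑ v, ‖f v‖ ^ 2 = A ^ 2 + B ^ 2 := by
    rw [← hcover, sum_union hdisj, Real.sq_sqrt (sum_nonneg fun v _ => sq_nonneg _),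
      Real.sq_sqrt (sum_nonneg fun v _ => sq_nonneg _)]
  have hB : B ≤ √(D₀ / K₀) * A + √(Λ / K₀) * √(A ^ 2 + B ^ 2) := by
    have := (sqrt_mul_sqrt_sum_norm_sq_le hw hw₀ hK₀ hD₀ f).trans
      (by gcongr : _ ≤ √D₀ * A + √(Λ * ∑ v, ‖f v‖ ^ 2))
    rw [hAB, Real.sqrt_mul' _ (by positivity)] at this
    rw [Real.sqrt_div' _ hK₀pos.le, Real.sqrt_div' _ hK₀pos.le]
    field_simp
    linarith
  have hα : √(Λ / K₀) < 1 := by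
    rw [Real.sqrt_lt' one_pos, one_pow, div_lt_one hK₀pos]
    exact hΛ
  rw [hAB]
  simpa [Real.sq_sqrt (div_nonneg hD₀nn hK₀pos.le)] using
    sqrt_sq_add_sq_le_of_le_mul_add (Real.sqrt_nonneg _) (Real.sqrt_nonneg _)
      (Real.sqrt_nonneg _) hα hB

end Sampling

theorem statement10_general {V : Type*} [Fintype V] [DecidableEq V] (w : V → V → ℝ)
    (hsymm : ∀ u v, w u v = w v u)
    (hnonneg : ∀ u v, 0 ≤ w u v)
    (S₀ S₁ : Finset V) (hdisj : Disjoint S₀ S₁) (hcover : S₀ ∪ S₁ = Finset.univ)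
    (K₀ D₀ : ℝ) (hK₀pos : 0 < K₀)
    (hK₀ : ∀ v ∈ S₁, K₀ ≤ ∑ u ∈ S₀, w u v)
    (hD₀ : ∀ v ∈ S₀, ∑ u ∈ S₁, w u v ≤ D₀)
    (ω : ℝ) (hω : ω < K₀ / 2) (f : V → ℂ)
    (hf : f ∈ Submodule.span ℂ {g : V → ℂ | ∃ μ : ℝ, 0 ≤ μ ∧ μ ≤ ω ∧
      ∀ v, (∑ u, (g v - g u) * (w v u : ℂ)) = (μ : ℂ) * g v}) :
    Real.sqrt (∑ v, ‖f v‖ ^ 2) ≤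
      (1 - Real.sqrt (2 * ω / K₀))⁻¹ * Real.sqrt (1 + D₀ / K₀) *
        Real.sqrt (∑ v ∈ S₀, ‖f v‖ ^ 2) :=
  sqrt_sum_norm_sq_le_of_dirichlet_le hsymm hnonneg hdisj hcover hK₀pos hK₀ hD₀
    (by linarith) (sum_sum_mul_norm_sub_sq_le_of_mem_span hsymm hf)

/-- sampling estimate for Paley–Wiener functions, two-set partition,
ν ≡ 1. `PW_ω(L_w)` is formalized as the span of eigenfunctions of the Laplacian with
eigenvalue in `[0, ω]`. If `0 < ω < K₀/2`, then
`‖f‖₂ ≤ (1 − √(2ω/K₀))⁻¹ (1 + D₀/K₀)^{1/2} ‖f|_{S₀}‖₂`. -/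
theorem statement10 {V : Type*} [Fintype V] [DecidableEq V] (w : V → V → ℝ)
    (hsymm : ∀ u v, w u v = w v u) (hdiag : ∀ u, w u u = 0)
    (hnonneg : ∀ u v, 0 ≤ w u v)
    (S₀ S₁ : Finset V) (hdisj : Disjoint S₀ S₁) (hcover : S₀ ∪ S₁ = Finset.univ)
    (K₀ D₀ : ℝ) (hK₀pos : 0 < K₀)
    (hK₀ : ∀ v ∈ S₁, K₀ ≤ ∑ u ∈ S₀, w u v)
    (hD₀ : ∀ v ∈ S₀, ∑ u ∈ S₁, w u v ≤ D₀)
    (ω : ℝ) (hωpos : 0 < ω) (hω : ω < K₀ / 2) (f : V → ℂ)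
    (hf : f ∈ Submodule.span ℂ {g : V → ℂ | ∃ μ : ℝ, 0 ≤ μ ∧ μ ≤ ω ∧
      ∀ v, (∑ u, (g v - g u) * (w v u : ℂ)) = (μ : ℂ) * g v}) :
    Real.sqrt (∑ v, ‖f v‖ ^ 2) ≤
      (1 - Real.sqrt (2 * ω / K₀))⁻¹ * Real.sqrt (1 + D₀ / K₀) *
        Real.sqrt (∑ v ∈ S₀, ‖f v‖ ^ 2) :=
  statement10_general w hsymm hnonneg S₀ S₁ hdisj hcover K₀ D₀ hK₀pos hK₀ hD₀ ω hω f hf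
end

section
/- Star graph sharpness: Let G be the unweighted star graph with center v₀ and leaves v₁,…,v_N (w(v₀,v_j)=1 for 1≤j≤N, all other weights 0), ν ≡ 1. Then for every f : V(G) → ℂ: ‖f‖₂ ≤ √(N+1) |f(v₀)| + ‖∇_w f‖₂, and equality holds for the constant function f ≡ 1. -/
/-! Split `f = f v₀ + (f - f v₀)` and apply the triangle inequality in `ℓ²`: the constant part
has norm `√(N+1) |f v₀|`, and each term `|f vⱼ - f v₀|²` of the other part already occurs in the
Dirichlet energy through the edge `vⱼ v₀`. -/

open Finset

/-- Edge weight of the unweighted star graph on `Fin (N+1)` with center `0`. -/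
def starWeight (N : ℕ) (i j : Fin (N + 1)) : ℝ :=
  if (i = 0 ∧ j ≠ 0) ∨ (j = 0 ∧ i ≠ 0) then 1 else 0

theorem sqrt_sum_norm_add_sq_le {ι E : Type*} [Fintype ι] [SeminormedAddCommGroup E]
    (f g : ι → E) :
    Real.sqrt (∑ i, ‖f i + g i‖ ^ 2) ≤
      Real.sqrt (∑ i, ‖f i‖ ^ 2) + Real.sqrt (∑ i, ‖g i‖ ^ 2) := by
  simpa only [PiLp.norm_eq_of_L2, PiLp.add_apply] using
    norm_add_le (WithLp.toLp 2 f : PiLp 2 fun _ : ι => E) (WithLp.toLp 2 g)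

theorem starWeight_nonneg (N : ℕ) (i j : Fin (N + 1)) : 0 ≤ starWeight N i j := by
  unfold starWeight
  split_ifs <;> norm_num

theorem starWeight_center_of_ne {N : ℕ} {i : Fin (N + 1)} (hi : i ≠ 0) :
    starWeight N i 0 = 1 := by
  simp [starWeight, hi]

theorem sum_norm_sub_center_sq_le {N : ℕ} {E : Type*} [SeminormedAddCommGroup E]
    (f : Fin (N + 1) → E) :
    ∑ i, ‖f i - f 0‖ ^ 2 ≤ ∑ i, ∑ j, ‖f i - f j‖ ^ 2 * starWeight N i j := by
  have hedge (i : Fin (N + 1)) : ‖f i - f 0‖ ^ 2 = ‖f i - f 0‖ ^ 2 * starWeight N i 0 := by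
    rcases eq_or_ne i 0 with rfl | hi
    · simp
    · rw [starWeight_center_of_ne hi, mul_one]
  rw [sum_congr rfl fun i _ => hedge i]
  gcongr with i
  exact single_le_sum (f := fun j => ‖f i - f j‖ ^ 2 * starWeight N i j)
    (fun j _ => mul_nonneg (sq_nonneg _) (starWeight_nonneg N i j)) (mem_univ 0)

theorem statement15_general (N : ℕ) :
    (∀ f : Fin (N + 1) → ℂ,
      Real.sqrt (∑ j, ‖f j‖ ^ 2) ≤
        Real.sqrt (N + 1) * ‖f 0‖ +
          Real.sqrt (∑ i, ∑ j, ‖f i - f j‖ ^ 2 * starWeight N i j)) ∧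
    Real.sqrt (∑ _j : Fin (N + 1), ‖(1 : ℂ)‖ ^ 2) =
      Real.sqrt (N + 1) * ‖(1 : ℂ)‖ +
        Real.sqrt (∑ i, ∑ j,
          ‖(1 : ℂ) - (1 : ℂ)‖ ^ 2 * starWeight N i j) := by
  refine ⟨fun f => ?_, by simp⟩
  have hcenter : Real.sqrt (∑ _j : Fin (N + 1), ‖f 0‖ ^ 2) = Real.sqrt (N + 1) * ‖f 0‖ := by
    rw [sum_const, card_univ, Fintype.card_fin, nsmul_eq_mul, Real.sqrt_mul (by positivity),
      Real.sqrt_sq (norm_nonneg _)]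
    push_cast
    ring_nf
  calc Real.sqrt (∑ j, ‖f j‖ ^ 2)
      = Real.sqrt (∑ j, ‖f 0 + (f j - f 0)‖ ^ 2) := by simp only [add_sub_cancel]
    _ ≤ Real.sqrt (∑ _j : Fin (N + 1), ‖f 0‖ ^ 2) + Real.sqrt (∑ j, ‖f j - f 0‖ ^ 2) :=
        sqrt_sum_norm_add_sq_le _ _
    _ ≤ Real.sqrt (N + 1) * ‖f 0‖ +
          Real.sqrt (∑ i, ∑ j, ‖f i - f j‖ ^ 2 * starWeight N i j) := by
        rw [hcenter]
        exact add_le_add_right (Real.sqrt_le_sqrt (sum_norm_sub_center_sq_le f)) _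

/-- star graph sharpness. For the star graph with center `v₀ = 0` and
`N` leaves, every `f` satisfies `‖f‖₂ ≤ √(N+1) |f(v₀)| + ‖∇_w f‖₂`, and equality
holds for the constant function `f ≡ 1`. -/
theorem statement15 (N : ℕ) (hN : 1 ≤ N) :
    (∀ f : Fin (N + 1) → ℂ,
      Real.sqrt (∑ j, ‖f j‖ ^ 2) ≤
        Real.sqrt (N + 1) * ‖f 0‖ +
          Real.sqrt (∑ i, ∑ j, ‖f i - f j‖ ^ 2 * starWeight N i j)) ∧
    Real.sqrt (∑ _j : Fin (N + 1), ‖(1 : ℂ)‖ ^ 2) =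
      Real.sqrt (N + 1) * ‖(1 : ℂ)‖ +
        Real.sqrt (∑ i, ∑ j,
          ‖(1 : ℂ) - (1 : ℂ)‖ ^ 2 * starWeight N i j) :=
  statement15_general N
end

section
/- Graph-theoretic sampling constants on ℤ: For the Cayley graph of ℤ with generators ±1 and S = kℤ with k = 2n+1 odd, using the partition S_m = {±m} + kℤ for 0 ≤ m ≤ n, the constants are D₀ = 2, K₀ = 1, D_m = K_m = 1 for 1 ≤ m ≤ n−1, and hence a_{S,2} = (∑_{m=0}^{n} ∏_{j=0}^{m−1} D_j/K_j)^{1/2} = √k and δ_{S,2} = (∑_{m=1}^{n} ∑_{j=1}^{m} K_{j−1}^{−1} ∏_{i=j}^{m−1} D_i/K_i)^{1/2} = √(n(n+1)/2). -/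
open Finset

/-- The sets `S_m = {±m} + kℤ` of the partition of `ℤ` used for sampling on `S₀ = kℤ`
(for `m = 0` this is `kℤ` itself). -/
def sampSet (k : ℤ) (m : ℕ) : Set ℤ :=
  {x | ∃ l : ℤ, x = (m : ℤ) + k * l ∨ x = -(m : ℤ) + k * l}

open Classical in
/-- `w_A(v)` for the Cayley graph of `ℤ` with generators `±1`: the number of
neighbours of `v` lying in `A`. -/
noncomputable def wAInt (A : Set ℤ) (v : ℤ) : ℝ :=
  (if v + 1 ∈ A then 1 else 0) + (if v - 1 ∈ A then 1 else 0)

/-!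
Every `v ∈ S_m` is `±(m + kl)`, and both `S_m` and the graph are symmetric under `v ↦ -v`, so
it suffices to look at `v = m + kl`. Its neighbours `m + 1 + kl` and `m - 1 + kl` lie in
`S_{m+1}` and `S_{|m-1|}`, and for `k = 2n + 1` the sets `S_a`, `S_b` with `a ≠ b`, `a + b < k`
are disjoint, which pins down every count. The sums then collapse, since `D_j / K_j = 1` for
`j ≥ 1`: the first to `1 + 2n`, the second to `∑_{m=1}^n m`.
-/

section Neighbours

variable {A : Set ℤ} {v : ℤ}

lemma wAInt_eq_two (hadd : v + 1 ∈ A) (hsub : v - 1 ∈ A) : wAInt A v = 2 := by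
  rw [wAInt, if_pos hadd, if_pos hsub]; norm_num

lemma wAInt_eq_one_of_add (hadd : v + 1 ∈ A) (hsub : v - 1 ∉ A) : wAInt A v = 1 := by
  rw [wAInt, if_pos hadd, if_neg hsub]; norm_num

lemma wAInt_eq_one_of_sub (hadd : v + 1 ∉ A) (hsub : v - 1 ∈ A) : wAInt A v = 1 := by
  rw [wAInt, if_neg hadd, if_pos hsub]; norm_num

lemma wAInt_neg (hA : ∀ x, -x ∈ A ↔ x ∈ A) (v : ℤ) : wAInt A (-v) = wAInt A v := by
  rw [wAInt, wAInt, ← hA (-v + 1), ← hA (-v - 1), add_comm]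
  congr 3 <;> ring

end Neighbours

section SampSet

variable {k : ℤ}

lemma natCast_add_mul_mem_sampSet (m : ℕ) (l : ℤ) : (m : ℤ) + k * l ∈ sampSet k m :=
  ⟨l, Or.inl rfl⟩

lemma neg_natCast_add_mul_mem_sampSet (m : ℕ) (l : ℤ) : -(m : ℤ) + k * l ∈ sampSet k m :=
  ⟨l, Or.inr rfl⟩

lemma neg_mem_sampSet_iff {m : ℕ} (x : ℤ) : -x ∈ sampSet k m ↔ x ∈ sampSet k m := by
  constructor <;>
  · rintro ⟨l, h | h⟩
    · exact ⟨-l, Or.inr (by linarith)⟩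
    · exact ⟨-l, Or.inl (by linarith)⟩

lemma dvd_sub_or_dvd_add_of_mem_sampSet {a b : ℕ} {x : ℤ} (ha : x ∈ sampSet k a)
    (hb : x ∈ sampSet k b) : k ∣ (a : ℤ) - b ∨ k ∣ (a : ℤ) + b := by
  obtain ⟨l, ha | ha⟩ := ha <;> obtain ⟨l', hb | hb⟩ := hb
  · exact Or.inl ⟨l' - l, by linarith⟩
  · exact Or.inr ⟨l' - l, by linarith⟩
  · exact Or.inr ⟨l - l', by linarith⟩
  · exact Or.inl ⟨l - l', by linarith⟩

lemma disjoint_sampSet {a b : ℕ} (hab : a ≠ b) (hk : (a + b : ℤ) < k) :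
    Disjoint (sampSet k a) (sampSet k b) := by
  rw [Set.disjoint_left]
  intro x ha hb
  rcases dvd_sub_or_dvd_add_of_mem_sampSet ha hb with h | h
  · have := Int.eq_zero_of_abs_lt_dvd h (abs_lt.2 ⟨by omega, by omega⟩)
    omega
  · have := Int.eq_zero_of_abs_lt_dvd h (abs_lt.2 ⟨by omega, by omega⟩)
    omega

lemma wAInt_sampSet_eq_of_forall {m j : ℕ} {c : ℝ}
    (h : ∀ l : ℤ, wAInt (sampSet k j) ((m : ℤ) + k * l) = c) :
    ∀ v ∈ sampSet k m, wAInt (sampSet k j) v = c := by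
  rintro v ⟨l, rfl | rfl⟩
  · exact h l
  · rw [← wAInt_neg neg_mem_sampSet_iff, neg_add, neg_neg, ← mul_neg]
    exact h (-l)

end SampSet

section Sums

lemma sum_range_succ_prod_range_ite_zero (n : ℕ) :
    ∑ m ∈ range (n + 1), ∏ j ∈ range m, (if j = 0 then (2 : ℝ) else 1) = 2 * n + 1 := by
  simp [sum_range_succ']
  ring

lemma prod_Ico_ite_zero {j : ℕ} (hj : 1 ≤ j) (m : ℕ) :
    ∏ i ∈ Ico j m, (if i = 0 then (2 : ℝ) else 1) = 1 :=
  prod_eq_one fun i hi => if_neg (by rw [mem_Ico] at hi; omega)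

lemma sum_Icc_one_natCast (n : ℕ) : ∑ m ∈ Icc 1 n, (m : ℝ) = n * (n + 1) / 2 := by
  induction n with
  | zero => simp
  | succ n ih =>
    rw [sum_Icc_succ_top (by omega), ih]
    push_cast; ring

end Sums

theorem statement18_general (n : ℕ) (k : ℤ) (hk : k = 2 * n + 1)
    (D K : ℕ → ℝ) (hD : D = fun m => if m = 0 then 2 else 1) (hK : K = fun _ => 1) :
    (∀ v ∈ sampSet k 0, wAInt (sampSet k 1) v = 2) ∧
    (∀ m : ℕ, 1 ≤ m → m < n → ∀ v ∈ sampSet k m, wAInt (sampSet k (m + 1)) v = 1) ∧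
    (∀ m : ℕ, m < n → ∀ v ∈ sampSet k (m + 1), wAInt (sampSet k m) v = 1) ∧
    Real.sqrt (∑ m ∈ Finset.range (n + 1), ∏ j ∈ Finset.range m, D j / K j) =
      Real.sqrt (2 * n + 1) ∧
    Real.sqrt (∑ m ∈ Finset.Icc 1 n, ∑ j ∈ Finset.Icc 1 m,
        (K (j - 1))⁻¹ * ∏ i ∈ Finset.Ico j m, D i / K i) =
      Real.sqrt (n * (n + 1) / 2) := by
  subst hD hK
  refine ⟨?_, ?_, ?_, ?_, ?_⟩
  · refine wAInt_sampSet_eq_of_forall fun l => wAInt_eq_two ?_ ?_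
    · simpa [add_comm] using natCast_add_mul_mem_sampSet (k := k) 1 l
    · simpa [sub_eq_neg_add] using neg_natCast_add_mul_mem_sampSet (k := k) 1 l
  · intro m hm hmn
    refine wAInt_sampSet_eq_of_forall fun l => wAInt_eq_one_of_add ?_ fun hsub => ?_
    · simpa [add_right_comm] using natCast_add_mul_mem_sampSet (k := k) (m + 1) l
    · have hsub' : (m : ℤ) + k * l - 1 ∈ sampSet k (m - 1) := by
        simpa [Nat.cast_sub hm, sub_add_eq_add_sub] using
          natCast_add_mul_mem_sampSet (k := k) (m - 1) l
      exact (disjoint_sampSet (by omega) (by omega)).ne_of_mem hsub' hsub rfl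
  · intro m hmn
    refine wAInt_sampSet_eq_of_forall fun l => wAInt_eq_one_of_sub (fun hadd => ?_) ?_
    · have hadd' : ((m + 1 : ℕ) : ℤ) + k * l + 1 ∈ sampSet k (m + 2) := by
        convert natCast_add_mul_mem_sampSet (k := k) (m + 2) l using 1
        push_cast; ring
      exact (disjoint_sampSet (by omega) (by omega)).ne_of_mem hadd' hadd rfl
    · simpa [add_right_comm] using natCast_add_mul_mem_sampSet (k := k) m l
  · simp only [div_one]
    rw [sum_range_succ_prod_range_ite_zero]
  · congr 1
    simp only [div_one, inv_one, one_mul]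
    rw [← sum_Icc_one_natCast n]
    refine sum_congr rfl fun m _ => ?_
    rw [sum_congr rfl fun j hj => prod_Ico_ite_zero (mem_Icc.1 hj).1 m]
    simp

/-- graph-theoretic sampling constants on `ℤ` for `S = kℤ`,
`k = 2n + 1` odd, with the partition `S_m = {±m} + kℤ`, `0 ≤ m ≤ n`:
`D₀ = 2`, `K₀ = 1`, `D_m = K_m = 1` for `1 ≤ m ≤ n − 1`, hence
`a_{S,2} = √k` and `δ_{S,2} = √(n(n+1)/2)`. -/
theorem statement18 (n : ℕ) (hn : 1 ≤ n) (k : ℤ) (hk : k = 2 * n + 1)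
    (D K : ℕ → ℝ) (hD : D = fun m => if m = 0 then 2 else 1) (hK : K = fun _ => 1) :
    (∀ v ∈ sampSet k 0, wAInt (sampSet k 1) v = 2) ∧
    (∀ m : ℕ, 1 ≤ m → m < n → ∀ v ∈ sampSet k m, wAInt (sampSet k (m + 1)) v = 1) ∧
    (∀ m : ℕ, m < n → ∀ v ∈ sampSet k (m + 1), wAInt (sampSet k m) v = 1) ∧
    Real.sqrt (∑ m ∈ Finset.range (n + 1), ∏ j ∈ Finset.range m, D j / K j) =
      Real.sqrt (2 * n + 1) ∧
    Real.sqrt (∑ m ∈ Finset.Icc 1 n, ∑ j ∈ Finset.Icc 1 m,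
        (K (j - 1))⁻¹ * ∏ i ∈ Finset.Ico j m, D i / K i) =
      Real.sqrt (n * (n + 1) / 2) :=
  statement18_general n k hk D K hD hK
end
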